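/- arXiv:2508.07555 — 3 statements merged into one kernel-verified Lean document; each statement's English description precedes it below -/
import Mathlib

section
/- Let C : ℕ → ℝ, T > 0, τ_max ≥ 1, and for θ ∈ {0,…,τ_max−1} define γ(θ) = min_{1 ≤ k ≤ τ_max−θ} (C(θ+k) − C(θ))/(kT). If γ(θ) < β for every θ ∈ {0,1,…,τ_max−1}, then τ = τ_max minimizes C(τ) − τTβ over τ ∈ {0,1,…,τ_max}. -/
/-- The index function γ of one modality: for θ ∈ {0,…,τmax−1},
`idx C T τmax θ = min_{1 ≤ k ≤ τmax−θ} (C(θ+k) − C(θ))/(kT)`. -/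
noncomputable def idx (C : ℕ → ℝ) (T : ℝ) (τmax θ : ℕ) : ℝ :=
  sInf ((fun k : ℕ => (C (θ + k) - C θ) / ((k : ℝ) * T)) '' Set.Icc 1 (τmax - θ))

theorem stmt_3 (C : ℕ → ℝ) (T : ℝ) (hT : 0 < T) (τmax : ℕ) (hτ : 1 ≤ τmax)
    (β : ℝ) (hβ : ∀ θ < τmax, idx C T τmax θ < β) :
    ∀ τ ≤ τmax, C τmax - (τmax : ℝ) * T * β ≤ C τ - (τ : ℝ) * T * β := by
  suffices h : ∀ n, ∀ τ, τ ≤ τmax → τmax - τ ≤ n →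
      C τmax - (τmax : ℝ) * T * β ≤ C τ - (τ : ℝ) * T * β by
    intro τ hτle; exact h (τmax - τ) τ hτle le_rfl
  intro n
  induction n with
  | zero =>
    intro τ h1 h2
    have : τ = τmax := by omega
    subst this; exact le_rfl
  | succ n ih =>
    intro τ h1 h2
    by_cases hτe : τ = τmax
    · subst hτe; exact le_rfl
    · have hτlt : τ < τmax := lt_of_le_of_ne h1 hτe
      set S := (fun k : ℕ => (C (τ + k) - C τ) / ((k : ℝ) * T)) '' Set.Icc 1 (τmax - τ) with hS
      have hne : S.Nonempty := ⟨_, ⟨1, ⟨le_rfl, by omega⟩, rfl⟩⟩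
      obtain ⟨x, hx, hxlt⟩ : ∃ x ∈ S, x < β := by
        by_contra hcon
        push_neg at hcon
        have : β ≤ sInf S := le_csInf hne hcon
        have := hβ τ hτlt
        rw [idx] at this
        rw [← hS] at this
        linarith
      obtain ⟨k, hk, rfl⟩ := hx
      have hk1 : 1 ≤ k := hk.1
      have hkT : 0 < (k : ℝ) * T := by
        have : (0:ℝ) < (k:ℝ) := by exact_mod_cast hk1
        positivity
      rw [div_lt_iff₀ hkT] at hxlt
      have hk2 : k ≤ τmax - τ := hk.2
      have hih := ih (τ + k) (by omega) (by omega)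
      have hcast : ((τ + k : ℕ) : ℝ) = (τ : ℝ) + (k : ℝ) := by push_cast; ring
      rw [hcast] at hih
      nlinarith [hih, hxlt]
end

section
/- Let C : ℕ → ℝ, T > 0, τ_max ≥ 1, and define γ(θ) = min_{1 ≤ k ≤ τ_max−θ} (C(θ+k) − C(θ))/(kT) for θ ∈ {0,…,τ_max−1}. Fix j with 0 ≤ j < τ_max. If γ(i) < β for all i ∈ {0,…,j−1} and γ(j) ≥ β, then τ = j minimizes C(τ) − τTβ over τ ∈ {0,1,…,τ_max}. -/
theorem stmt_4 (C : ℕ → ℝ) (T : ℝ) (hT : 0 < T) (τmax : ℕ) (hτ : 1 ≤ τmax)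
    (β : ℝ) (j : ℕ) (hj : j < τmax)
    (hlt : ∀ i < j, idx C T τmax i < β) (hge : β ≤ idx C T τmax j) :
    ∀ τ ≤ τmax, C j - (j : ℝ) * T * β ≤ C τ - (τ : ℝ) * T * β := by
  -- Lemma A : for j < τ ≤ τmax, f j ≤ f τ
  have hA : ∀ τ, j < τ → τ ≤ τmax →
      C j - (j : ℝ) * T * β ≤ C τ - (τ : ℝ) * T * β := by
    intro τ hjτ hτm
    set k := τ - j with hk
    have hk1 : 1 ≤ k := Nat.le_sub_of_add_le (by omega)
    have hk2 : k ≤ τmax - j := by omega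
    have hmem : (C (j + k) - C j) / ((k : ℝ) * T) ∈
        ((fun k : ℕ => (C (j + k) - C j) / ((k : ℝ) * T)) '' Set.Icc 1 (τmax - j)) :=
      ⟨k, ⟨hk1, hk2⟩, rfl⟩
    have hbdd : BddBelow ((fun k : ℕ => (C (j + k) - C j) / ((k : ℝ) * T)) ''
        Set.Icc 1 (τmax - j)) :=
      (Set.Finite.image _ (Set.finite_Icc _ _)).bddBelow
    have hle : β ≤ (C (j + k) - C j) / ((k : ℝ) * T) :=
      le_trans hge (csInf_le hbdd hmem)
    have hkT : 0 < (k : ℝ) * T := by positivity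
    rw [le_div_iff₀ hkT] at hle
    have hjk : j + k = τ := by omega
    rw [hjk] at hle
    have hcast : (τ : ℝ) = (j : ℝ) + (k : ℝ) := by
      rw [hk]; push_cast [Nat.cast_sub (le_of_lt hjτ)]; ring
    rw [hcast]; nlinarith
  -- Lemma B : for τ < j, there is a strictly better later point
  have hB : ∀ τ, τ < j → ∃ k, 1 ≤ k ∧ k ≤ τmax - τ ∧
      C (τ + k) - (((τ + k : ℕ)) : ℝ) * T * β < C τ - (τ : ℝ) * T * β := by
    intro τ hτj
    have hne : ((fun k : ℕ => (C (τ + k) - C τ) / ((k : ℝ) * T)) ''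
        Set.Icc 1 (τmax - τ)).Nonempty := by
      refine ⟨_, ⟨1, ⟨le_refl 1, by omega⟩, rfl⟩⟩
    have hfin : ((fun k : ℕ => (C (τ + k) - C τ) / ((k : ℝ) * T)) ''
        Set.Icc 1 (τmax - τ)).Finite := Set.Finite.image _ (Set.finite_Icc _ _)
    have hmem := hne.csInf_mem hfin
    obtain ⟨k, ⟨hk1, hk2⟩, hkeq⟩ := hmem
    refine ⟨k, hk1, hk2, ?_⟩
    have hlt' : (C (τ + k) - C τ) / ((k : ℝ) * T) < β := by
      have h := hlt τ hτj
      rw [idx, ← hkeq] at h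
      exact h
    have hkT : 0 < (k : ℝ) * T := by positivity
    rw [div_lt_iff₀ hkT] at hlt'
    push_cast
    nlinarith
  have main : ∀ n, ∀ τ, τ ≤ τmax → j - τ ≤ n →
      C j - (j : ℝ) * T * β ≤ C τ - (τ : ℝ) * T * β := by
    intro n
    induction n with
    | zero =>
      intro τ hτm h0
      rcases lt_trichotomy j τ with h | h | h
      · exact hA τ h hτm
      · rw [h]
      · omega
    | succ n ih =>
      intro τ hτm hn
      rcases lt_trichotomy j τ with h | h | h
      · exact hA τ h hτm
      · rw [h]
      · obtain ⟨k, hk1, hk2, hklt⟩ := hB τ h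
        have h1 : C j - (j : ℝ) * T * β ≤ C (τ + k) - ((τ + k : ℕ) : ℝ) * T * β :=
          ih (τ + k) (by omega) (by omega)
        exact le_of_lt (lt_of_le_of_lt h1 hklt)
  intro τ hτm
  exact main (j - τ) τ hτm le_rfl
end

section
/- Let C : ℕ → ℝ, T > 0, τ_max ≥ 1, γ(θ) = min_{1 ≤ k ≤ τ_max−θ} (C(θ+k) − C(θ))/(kT), and β ∈ ℝ. The value τ_opt(β) := min( min{θ ∈ {0,…,τ_max−1} : γ(θ) ≥ β} , τ_max ) (with min ∅ = τ_max) attains the minimum of C(τ) − τTβ over τ ∈ {0,1,…,τ_max}. -/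
/-- The index-based threshold decision: `min( min{θ < τmax : γ(θ) ≥ β}, τmax )`,
with the inner minimum of the empty set taken to be `+∞` (so the outer min yields
`τmax`). -/
noncomputable def tauOpt (C : ℕ → ℝ) (T : ℝ) (τmax : ℕ) (β : ℝ) : ℕ :=
  sInf {θ : ℕ | θ = τmax ∨ (θ < τmax ∧ β ≤ idx C T τmax θ)}

theorem stmt_6 (C : ℕ → ℝ) (T : ℝ) (hT : 0 < T) (τmax : ℕ) (hτ : 1 ≤ τmax)
    (β : ℝ) :
    tauOpt C T τmax β ≤ τmax ∧
      ∀ τ ≤ τmax,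
        C (tauOpt C T τmax β) - (tauOpt C T τmax β : ℝ) * T * β ≤
          C τ - (τ : ℝ) * T * β := by
  classical
  set f : ℕ → ℝ := fun τ => C τ - (τ : ℝ) * T * β with hf
  -- key arithmetic facts
  have key1 : ∀ θ k : ℕ, 1 ≤ k →
      (C (θ + k) - C θ) / ((k : ℝ) * T) < β → f (θ + k) < f θ := by
    intro θ k hk h
    have hkpos : (0 : ℝ) < (k : ℝ) * T := by
      have : (0:ℝ) < (k:ℝ) := by exact_mod_cast hk
      positivity
    have h' : C (θ + k) - C θ < β * ((k : ℝ) * T) := (div_lt_iff₀ hkpos).mp h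
    have e : (((θ + k : ℕ)) : ℝ) = (θ : ℝ) + (k : ℝ) := by push_cast; ring
    simp only [hf, e]
    nlinarith [h']
  have key2 : ∀ θ k : ℕ, 1 ≤ k →
      β ≤ (C (θ + k) - C θ) / ((k : ℝ) * T) → f θ ≤ f (θ + k) := by
    intro θ k hk h
    have hkpos : (0 : ℝ) < (k : ℝ) * T := by
      have : (0:ℝ) < (k:ℝ) := by exact_mod_cast hk
      positivity
    have h' : β * ((k : ℝ) * T) ≤ C (θ + k) - C θ := (le_div_iff₀ hkpos).mp h
    have e : (((θ + k : ℕ)) : ℝ) = (θ : ℝ) + (k : ℝ) := by push_cast; ring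
    simp only [hf, e]
    nlinarith [h']
  set S : Set ℕ := {θ : ℕ | θ = τmax ∨ (θ < τmax ∧ β ≤ idx C T τmax θ)} with hSdef
  have hmemS : τmax ∈ S := Or.inl rfl
  have hneS : S.Nonempty := ⟨τmax, hmemS⟩
  have hstar : sInf S ∈ S := Nat.sInf_mem hneS
  have hle : sInf S ≤ τmax := Nat.sInf_le hmemS
  have htauOpt : tauOpt C T τmax β = sInf S := rfl
  -- upward optimality
  have hup : ∀ τ, sInf S ≤ τ → τ ≤ τmax → f (sInf S) ≤ f τ := by
    intro τ h1 h2
    rcases eq_or_lt_of_le h1 with heq | hlt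
    · rw [heq]
    · rcases hstar with heq | ⟨hlt', hidx⟩
      · omega
      · -- sInf S < τ ≤ τmax, use idx bound
        set k := τ - sInf S with hk
        have hk1 : 1 ≤ k := by omega
        have hkle : k ≤ τmax - sInf S := by omega
        have hτeq : τ = sInf S + k := by omega
        have hmem : (C (sInf S + k) - C (sInf S)) / ((k : ℝ) * T) ∈
            ((fun k : ℕ => (C (sInf S + k) - C (sInf S)) / ((k : ℝ) * T)) ''
              Set.Icc 1 (τmax - sInf S)) :=
          Set.mem_image_of_mem _ ⟨hk1, hkle⟩
        have hbdd : BddBelow ((fun k : ℕ => (C (sInf S + k) - C (sInf S)) / ((k : ℝ) * T)) ''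
            Set.Icc 1 (τmax - sInf S)) :=
          ((Set.finite_Icc 1 (τmax - sInf S)).image _).bddBelow
        have : idx C T τmax (sInf S) ≤
            (C (sInf S + k) - C (sInf S)) / ((k : ℝ) * T) := csInf_le hbdd hmem
        have hβ : β ≤ (C (sInf S + k) - C (sInf S)) / ((k : ℝ) * T) := le_trans hidx this
        rw [hτeq]
        exact key2 _ _ hk1 hβ
  -- full optimality by induction on τmax - τ
  have main : ∀ n : ℕ, ∀ τ, τ ≤ τmax → τmax - τ ≤ n → f (sInf S) ≤ f τ := by
    intro n
    induction n with
    | zero =>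
      intro τ h1 h2
      have : τ = τmax := by omega
      exact hup τ (this ▸ hle) h1
    | succ n ih =>
      intro τ h1 h2
      by_cases hc : sInf S ≤ τ
      · exact hup τ hc h1
      · push_neg at hc
        have hτS : τ ∉ S := Nat.notMem_of_lt_sInf hc
        have hτlt : τ < τmax := lt_of_lt_of_le hc hle
        have hidx : idx C T τmax τ < β := by
          by_contra hcon
          push_neg at hcon
          exact hτS (Or.inr ⟨hτlt, hcon⟩)
        -- the inf is attained on a finite nonempty set
        have hne : ((fun k : ℕ => (C (τ + k) - C τ) / ((k : ℝ) * T)) ''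
            Set.Icc 1 (τmax - τ)).Nonempty := by
          refine ⟨_, Set.mem_image_of_mem _ (⟨le_refl 1, ?_⟩ : 1 ∈ Set.Icc 1 (τmax - τ))⟩
          omega
        have hfin : ((fun k : ℕ => (C (τ + k) - C τ) / ((k : ℝ) * T)) ''
            Set.Icc 1 (τmax - τ)).Finite :=
          (Set.finite_Icc 1 (τmax - τ)).image _
        have hmem := hne.csInf_mem hfin
        obtain ⟨k, ⟨hk1, hk2⟩, hkeq⟩ := hmem
        have hklt : (C (τ + k) - C τ) / ((k : ℝ) * T) < β := by
          exact lt_of_eq_of_lt hkeq hidx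
        have hdec : f (τ + k) < f τ := key1 τ k hk1 hklt
        have h1' : τ + k ≤ τmax := by omega
        have h2' : τmax - (τ + k) ≤ n := by omega
        exact le_of_lt (lt_of_le_of_lt (ih (τ + k) h1' h2') hdec)
  refine ⟨hle, ?_⟩
  intro τ hτle
  exact main τmax τ hτle (by omega)
end
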